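/- Let V be a pseudo-Euclidean space, R a curvature-type tensor, and x, y, a vectors with ⟨x,x⟩=⟨y,y⟩=1, ⟨a,a⟩=−1, pairwise orthogonal. If R(x, y+a, y+a, x) = 0, then K(x,y) = −K'(x,a) in the sense R(x,y,y,x) = −R(x,a,a,x), and R(x,y,a,x) = 0. -/

import Mathlib

/-!
Replacing `y` by `-y` keeps the triple admissible and flips the sign of the cross term
`2 R(x,y,a,x)` in the expansion of `R(x, y+a, y+a, x)`; the sum and the difference of the two
vanishing expansions give the two identities.
-/

section CurvatureTensor

variable {V : Type*} [AddCommGroup V] [Module ℝ V]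
  (R : V →ₗ[ℝ] V →ₗ[ℝ] V →ₗ[ℝ] V →ₗ[ℝ] ℝ)

theorem curvature_swap_middle
    (hR1 : ∀ X Y Z W : V, R X Y Z W = - R Y X Z W)
    (hR2 : ∀ X Y Z W : V, R X Y Z W = - R X Y W Z)
    (hR3 : ∀ X Y Z W : V, R X Y Z W = R Z W X Y)
    (x y z : V) : R x z y x = R x y z x := by
  rw [hR3, hR1, hR2, neg_neg]

theorem curvature_add_add
    (hR1 : ∀ X Y Z W : V, R X Y Z W = - R Y X Z W)
    (hR2 : ∀ X Y Z W : V, R X Y Z W = - R X Y W Z)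
    (hR3 : ∀ X Y Z W : V, R X Y Z W = R Z W X Y)
    (x y z : V) :
    R x (y + z) (y + z) x = R x y y x + 2 * R x y z x + R x z z x := by
  simp only [map_add, LinearMap.add_apply, curvature_swap_middle R hR1 hR2 hR3 x y z]
  ring

end CurvatureTensor

theorem isotropic_direction_vanish_imp_curvature_relations_general
    {V : Type*} [AddCommGroup V] [Module ℝ V]
    (g : V →ₗ[ℝ] V →ₗ[ℝ] ℝ)
    (R : V →ₗ[ℝ] V →ₗ[ℝ] V →ₗ[ℝ] V →ₗ[ℝ] ℝ)
    (hR1 : ∀ X Y Z W : V, R X Y Z W = - R Y X Z W)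
    (hR2 : ∀ X Y Z W : V, R X Y Z W = - R X Y W Z)
    (hR3 : ∀ X Y Z W : V, R X Y Z W = R Z W X Y)
    (h : ∀ x y a : V, g x x = 1 → g y y = 1 → g a a = -1 →
      g x y = 0 → g x a = 0 → g y a = 0 →
      R x (y + a) (y + a) x = 0) :
    ∀ x y a : V, g x x = 1 → g y y = 1 → g a a = -1 →
      g x y = 0 → g x a = 0 → g y a = 0 →
      R x y y x = - R x a a x ∧ R x y a x = 0 := by
  intro x y a hx hy ha hxy hxa hya
  have hplus := h x y a hx hy ha hxy hxa hya
  have hminus := h x (-y) a hx (by simpa using hy) ha (by simpa using hxy) hxa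
    (by simpa using hya)
  rw [curvature_add_add R hR1 hR2 hR3] at hplus hminus
  simp only [map_neg, LinearMap.neg_apply, neg_neg] at hminus
  constructor <;> linarith

/-- First step of Theorem A: if `R(x, y+a, y+a, x) = 0` for all triples `{x,y,a}` with
`g(x,x) = g(y,y) = 1`, `g(a,a) = −1`, pairwise orthogonal, then for all such triples
`R(x,y,y,x) = −R(x,a,a,x)` and `R(x,y,a,x) = 0`. -/
theorem isotropic_direction_vanish_imp_curvature_relations
    {V : Type*} [AddCommGroup V] [Module ℝ V]
    (g : V →ₗ[ℝ] V →ₗ[ℝ] ℝ)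
    (hgsym : ∀ X Y : V, g X Y = g Y X)
    (hgnondeg : ∀ X : V, (∀ Y : V, g X Y = 0) → X = 0)
    (R : V →ₗ[ℝ] V →ₗ[ℝ] V →ₗ[ℝ] V →ₗ[ℝ] ℝ)
    (hR1 : ∀ X Y Z W : V, R X Y Z W = - R Y X Z W)
    (hR2 : ∀ X Y Z W : V, R X Y Z W = - R X Y W Z)
    (hR3 : ∀ X Y Z W : V, R X Y Z W = R Z W X Y)
    (hB : ∀ X Y Z W : V, R X Y Z W + R Y Z X W + R Z X Y W = 0)
    (h : ∀ x y a : V, g x x = 1 → g y y = 1 → g a a = -1 →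
      g x y = 0 → g x a = 0 → g y a = 0 →
      R x (y + a) (y + a) x = 0) :
    ∀ x y a : V, g x x = 1 → g y y = 1 → g a a = -1 →
      g x y = 0 → g x a = 0 → g y a = 0 →
      R x y y x = - R x a a x ∧ R x y a x = 0 :=
  isotropic_direction_vanish_imp_curvature_relations_general g R hR1 hR2 hR3 h
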